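/- Let ψ(x,t) = exp(R(x,t) + (i/ħ) S(x,t)) with R, S smooth real-valued functions, satisfying the Schrödinger equation ∂ψ/∂t = (iħ/2m) Δψ - (i/ħ) V ψ. Then R and S satisfy the Madelung system: ∂_t R + (1/m)⟨∇R, ∇S⟩ + (1/2m)ΔS = 0 and ∂_t S + (1/2m)|∇S|² + V - (ħ²/2m)(|∇R|² + ΔR) = 0. -/

import Mathlib

open MeasureTheory Real

/-- `i`-th partial derivative of a scalar function on `ℝ^d`. -/
noncomputable def pd {d : ℕ} (f : (Fin d → ℝ) → ℝ) (i : Fin d) (x : Fin d → ℝ) : ℝ :=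
  fderiv ℝ f x (Pi.single i 1)

/-- Gradient of a scalar function on `ℝ^d`. -/
noncomputable def grad' {d : ℕ} (f : (Fin d → ℝ) → ℝ) (x : Fin d → ℝ) : Fin d → ℝ :=
  fun i => pd f i x

/-- Divergence of a vector field on `ℝ^d`. -/
noncomputable def div' {d : ℕ} (b : (Fin d → ℝ) → (Fin d → ℝ)) (x : Fin d → ℝ) : ℝ :=
  ∑ i, pd (fun y => b y i) i x

/-- Laplacian of a scalar function on `ℝ^d`. -/
noncomputable def lap' {d : ℕ} (f : (Fin d → ℝ) → ℝ) : (Fin d → ℝ) → ℝ :=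
  div' (grad' f)

/-- Euclidean inner product on `ℝ^d`. -/
def dot {d : ℕ} (u v : Fin d → ℝ) : ℝ := ∑ i, u i * v i

/-- Jacobian of a vector field applied to a vector: `((Du) v)_i = ∑_j ∂_j u_i · v_j`. -/
noncomputable def jacApp {d : ℕ} (u : (Fin d → ℝ) → (Fin d → ℝ)) (v : Fin d → ℝ)
    (x : Fin d → ℝ) : Fin d → ℝ :=
  fun i => ∑ j, pd (fun y => u y i) j x * v j

/-- `i`-th partial derivative of a complex-valued function on `ℝ^d`. -/
noncomputable def pdC {d : ℕ} (f : (Fin d → ℝ) → ℂ) (i : Fin d) (x : Fin d → ℝ) : ℂ :=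
  fderiv ℝ f x (Pi.single i 1)

/-- Laplacian of a complex-valued function on `ℝ^d`. -/
noncomputable def lapC {d : ℕ} (f : (Fin d → ℝ) → ℂ) (x : Fin d → ℝ) : ℂ :=
  ∑ i, pdC (fun y => pdC f i y) i x

lemma pd_smooth {d : ℕ} {f : (Fin d → ℝ) → ℝ} (hf : ContDiff ℝ (⊤ : ℕ∞) f) (i : Fin d) :
    ContDiff ℝ (⊤ : ℕ∞) (fun x => pd f i x) :=
  (hf.fderiv_right (by simp)).clm_apply contDiff_const

lemma hasFDerivAt_comb {d : ℕ} (a b : (Fin d → ℝ) → ℝ) (c : ℂ) (x : Fin d → ℝ)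
    (ha : DifferentiableAt ℝ a x) (hb : DifferentiableAt ℝ b x) :
    HasFDerivAt (fun y => ((a y : ℂ) + c * (b y : ℂ)))
      (Complex.ofRealCLM.comp (fderiv ℝ a x) + c • (Complex.ofRealCLM.comp (fderiv ℝ b x))) x := by
  exact (Complex.ofRealCLM.hasFDerivAt.comp x ha.hasFDerivAt).add
    ((Complex.ofRealCLM.hasFDerivAt.comp x hb.hasFDerivAt).const_mul c)

lemma pdC_comb {d : ℕ} (a b : (Fin d → ℝ) → ℝ) (c : ℂ) (i : Fin d) (x : Fin d → ℝ)
    (ha : DifferentiableAt ℝ a x) (hb : DifferentiableAt ℝ b x) :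
    pdC (fun y => ((a y : ℂ) + c * (b y : ℂ))) i x = (pd a i x : ℂ) + c * (pd b i x : ℂ) := by
  rw [pdC, (hasFDerivAt_comb a b c x ha hb).fderiv]
  simp [pd]

lemma pdC_exp {d : ℕ} (a b : (Fin d → ℝ) → ℝ) (c : ℂ) (i : Fin d) (x : Fin d → ℝ)
    (ha : DifferentiableAt ℝ a x) (hb : DifferentiableAt ℝ b x) :
    pdC (fun y => Complex.exp ((a y : ℂ) + c * (b y : ℂ))) i x
      = Complex.exp ((a x : ℂ) + c * (b x : ℂ)) * ((pd a i x : ℂ) + c * (pd b i x : ℂ)) := by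
  rw [pdC, ((hasFDerivAt_comb a b c x ha hb).cexp).fderiv]
  simp [pd]
  ring

lemma pdC2 {d : ℕ} (a b : (Fin d → ℝ) → ℝ) (c : ℂ) (i : Fin d) (x : Fin d → ℝ)
    (ha : ContDiff ℝ (⊤ : ℕ∞) a) (hb : ContDiff ℝ (⊤ : ℕ∞) b) :
    pdC (fun y => pdC (fun z => Complex.exp ((a z : ℂ) + c * (b z : ℂ))) i y) i x
      = Complex.exp ((a x : ℂ) + c * (b x : ℂ)) *
          (((pd a i x : ℂ) + c * (pd b i x : ℂ)) ^ 2
            + ((pd (pd a i) i x : ℂ) + c * (pd (pd b i) i x : ℂ))) := by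
  have hfun : (fun y => pdC (fun z => Complex.exp ((a z : ℂ) + c * (b z : ℂ))) i y)
      = fun y => Complex.exp ((a y : ℂ) + c * (b y : ℂ)) * ((pd a i y : ℂ) + c * (pd b i y : ℂ)) :=
    funext fun y => pdC_exp a b c i y (ha.differentiable (by simp) y) (hb.differentiable (by simp) y)
  rw [hfun, pdC]
  have h1 := (hasFDerivAt_comb a b c x (ha.differentiable (by simp) x)
    (hb.differentiable (by simp) x)).cexp
  have h2 := hasFDerivAt_comb (pd a i) (pd b i) c x
    ((pd_smooth ha i).differentiable (by simp) x) ((pd_smooth hb i).differentiable (by simp) x)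
  rw [HasFDerivAt.fderiv (f := fun y => Complex.exp ((a y : ℂ) + c * (b y : ℂ)) * ((pd a i y : ℂ) + c * (pd b i y : ℂ))) (h1.mul h2)]
  simp [pd]
  ring

/-- the Schrödinger equation for `ψ = exp(R + (i/ħ)S)` is equivalent to the
Madelung system for `(R, S)`. -/
theorem stmt7 {d : ℕ} (R S : (Fin d → ℝ) → ℝ → ℝ) (V : (Fin d → ℝ) → ℝ)
    (ℏ m : ℝ) (hℏ : 0 < ℏ) (hm : 0 < m)
    (hR : ContDiff ℝ (⊤ : ℕ∞) (fun p : (Fin d → ℝ) × ℝ => R p.1 p.2))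
    (hS : ContDiff ℝ (⊤ : ℕ∞) (fun p : (Fin d → ℝ) × ℝ => S p.1 p.2))
    (hV : ContDiff ℝ (⊤ : ℕ∞) V)
    (ψ : ℝ → (Fin d → ℝ) → ℂ)
    (hψ : ∀ t x, ψ t x = Complex.exp ((R x t : ℂ) + (Complex.I / (ℏ : ℂ)) * (S x t : ℂ)))
    (hSch : ∀ t x, deriv (fun s => ψ s x) t
      = (Complex.I * (ℏ : ℂ) / (2 * (m : ℂ))) * lapC (ψ t) x
        - (Complex.I / (ℏ : ℂ)) * (V x : ℂ) * ψ t x) :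
    ∀ t x,
      (deriv (fun s => R x s) t
        + (1 / m) * dot (grad' (fun y => R y t) x) (grad' (fun y => S y t) x)
        + (1 / (2 * m)) * lap' (fun y => S y t) x = 0)
      ∧ (deriv (fun s => S x s) t
        + (1 / (2 * m)) * dot (grad' (fun y => S y t) x) (grad' (fun y => S y t) x)
        + V x
        - (ℏ ^ 2 / (2 * m)) * (dot (grad' (fun y => R y t) x) (grad' (fun y => R y t) x)
            + lap' (fun y => R y t) x) = 0) := by
  intro t x
  set c : ℂ := Complex.I / (ℏ : ℂ) with hc
  -- smoothness of slices
  have hR' : ContDiff ℝ (⊤ : ℕ∞) (fun y => R y t) := hR.comp (contDiff_id.prodMk contDiff_const)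
  have hS' : ContDiff ℝ (⊤ : ℕ∞) (fun y => S y t) := hS.comp (contDiff_id.prodMk contDiff_const)
  have hRt : ContDiff ℝ (⊤ : ℕ∞) (fun s => R x s) := hR.comp (contDiff_const.prodMk contDiff_id)
  have hSt : ContDiff ℝ (⊤ : ℕ∞) (fun s => S x s) := hS.comp (contDiff_const.prodMk contDiff_id)
  -- abbreviations
  set r0 := deriv (fun s => R x s) t with hr0
  set s0 := deriv (fun s => S x s) t with hs0
  set lR := lap' (fun y => R y t) x with hlR
  set lS := lap' (fun y => S y t) x with hlS
  set gRR := dot (grad' (fun y => R y t) x) (grad' (fun y => R y t) x) with hgRR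
  set gRS := dot (grad' (fun y => R y t) x) (grad' (fun y => S y t) x) with hgRS
  set gSS := dot (grad' (fun y => S y t) x) (grad' (fun y => S y t) x) with hgSS
  set E : (Fin d → ℝ) → ℂ := fun y => Complex.exp ((R y t : ℂ) + c * (S y t : ℂ)) with hE
  have hψt : ψ t = E := funext fun y => hψ t y
  have hEne : E x ≠ 0 := Complex.exp_ne_zero _
  -- time derivative
  have hTd : deriv (fun s => ψ s x) t = E x * ((r0 : ℂ) + c * (s0 : ℂ)) := by
    have h1 : HasDerivAt (fun s => ((R x s : ℂ) + c * (S x s : ℂ)))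
        ((r0 : ℂ) + c * (s0 : ℂ)) t :=
      ((hRt.differentiable (by simp) t).hasDerivAt.ofReal_comp).add
        (((hSt.differentiable (by simp) t).hasDerivAt.ofReal_comp).const_mul c)
    have h2 := h1.cexp
    have h3 : (fun s => ψ s x) = fun s => Complex.exp ((R x s : ℂ) + c * (S x s : ℂ)) :=
      funext fun s => hψ s x
    rw [h3, h2.deriv]
  -- Laplacian
  have hlap : lapC (ψ t) x
      = E x * (((lR : ℂ) + c * (lS : ℂ))
          + ∑ i, ((pd (fun y => R y t) i x : ℂ) + c * (pd (fun y => S y t) i x : ℂ)) ^ 2) := by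
    rw [hψt, lapC]
    have hterm : ∀ i : Fin d, pdC (fun y => pdC E i y) i x
        = E x * (((pd (fun y => R y t) i x : ℂ) + c * (pd (fun y => S y t) i x : ℂ)) ^ 2
            + ((pd (pd (fun y => R y t) i) i x : ℂ) + c * (pd (pd (fun y => S y t) i) i x : ℂ))) :=
      fun i => pdC2 (fun y => R y t) (fun y => S y t) c i x hR' hS'
    rw [Finset.sum_congr rfl fun i _ => hterm i, ← Finset.mul_sum]
    congr 1
    rw [Finset.sum_add_distrib, Finset.sum_add_distrib, ← Finset.mul_sum]
    have e1 : lR = ∑ i, pd (pd (fun y => R y t) i) i x := rfl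
    have e2 : lS = ∑ i, pd (pd (fun y => S y t) i) i x := rfl
    push_cast [e1, e2]
    ring
  -- sum of squares
  have hsq : ∑ i, ((pd (fun y => R y t) i x : ℂ) + c * (pd (fun y => S y t) i x : ℂ)) ^ 2
      = (gRR : ℂ) + 2 * c * (gRS : ℂ) + c ^ 2 * (gSS : ℂ) := by
    have e1 : (gRR : ℂ) = ∑ i, ((pd (fun y => R y t) i x : ℂ) * (pd (fun y => R y t) i x : ℂ)) := by
      rw [hgRR]; simp only [dot, grad']; push_cast; rfl
    have e2 : (gRS : ℂ) = ∑ i, ((pd (fun y => R y t) i x : ℂ) * (pd (fun y => S y t) i x : ℂ)) := by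
      rw [hgRS]; simp only [dot, grad']; push_cast; rfl
    have e3 : (gSS : ℂ) = ∑ i, ((pd (fun y => S y t) i x : ℂ) * (pd (fun y => S y t) i x : ℂ)) := by
      rw [hgSS]; simp only [dot, grad']; push_cast; rfl
    rw [e1, e2, e3, Finset.mul_sum, Finset.mul_sum, ← Finset.sum_add_distrib,
      ← Finset.sum_add_distrib]
    exact Finset.sum_congr rfl fun i _ => by ring
  -- the cancelled equation
  have hSch' := hSch t x
  rw [hTd, hlap, hsq, hψt] at hSch'
  have hhbarC : (ℏ : ℂ) ≠ 0 := Complex.ofReal_ne_zero.mpr hℏ.ne'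
  have hmC : (m : ℂ) ≠ 0 := Complex.ofReal_ne_zero.mpr hm.ne'
  have hch : c * (ℏ : ℂ) = Complex.I := by rw [hc]; field_simp
  have hb : (2 * (m : ℂ)) * (Complex.I * (ℏ : ℂ) / (2 * (m : ℂ))) = Complex.I * (ℏ : ℂ) := by
    field_simp
  have key' : 2 * (m : ℂ) * (ℏ : ℂ) * (r0 : ℂ) + 2 * (m : ℂ) * Complex.I * (s0 : ℂ)
      = Complex.I * ((ℏ : ℂ) ^ 2 * (lR : ℂ) + Complex.I * (ℏ : ℂ) * (lS : ℂ)
          + (ℏ : ℂ) ^ 2 * (gRR : ℂ) + 2 * Complex.I * (ℏ : ℂ) * (gRS : ℂ)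
          + Complex.I ^ 2 * (gSS : ℂ))
        - 2 * (m : ℂ) * Complex.I * (V x : ℂ) := by
    apply mul_left_cancel₀ hEne
    linear_combination (2 * (m : ℂ) * (ℏ : ℂ)) * hSch'
      + (-(2 * (m : ℂ) * (s0 : ℂ) * E x) - 2 * (m : ℂ) * (V x : ℂ) * E x
          + Complex.I * (ℏ : ℂ) * E x * (lS : ℂ) + 2 * Complex.I * (ℏ : ℂ) * E x * (gRS : ℂ)
          + Complex.I * E x * (gSS : ℂ) * ((ℏ : ℂ) * c + Complex.I)) * hch
      + ((ℏ : ℂ) * E x * ((lR : ℂ) + c * (lS : ℂ) + (gRR : ℂ) + 2 * c * (gRS : ℂ)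
          + c ^ 2 * (gSS : ℂ))) * hb
  have key2 : ((2 * m * ℏ * r0 + 2 * ℏ * gRS + ℏ * lS : ℝ) : ℂ)
      + ((2 * m * s0 + gSS + 2 * m * V x - ℏ ^ 2 * (gRR + lR) : ℝ) : ℂ) * Complex.I = 0 := by
    push_cast
    linear_combination key'
      + (2 * (ℏ : ℂ) * (gRS : ℂ) + (ℏ : ℂ) * (lS : ℂ) + Complex.I * (gSS : ℂ)) * Complex.I_sq
  rw [Complex.ext_iff] at key2
  simp only [Complex.add_re, Complex.ofReal_re, Complex.mul_re, Complex.I_re, Complex.I_im,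
    Complex.ofReal_im, Complex.add_im, Complex.mul_im, Complex.zero_re, Complex.zero_im] at key2
  obtain ⟨k1, k2⟩ := key2
  have k1' : 2 * m * r0 + 2 * gRS + lS = 0 := by
    apply mul_left_cancel₀ hℏ.ne'
    linear_combination k1
  constructor
  · field_simp
    linear_combination k1'
  · have k2' : 2 * m * s0 + gSS + 2 * m * V x - ℏ ^ 2 * (gRR + lR) = 0 := by linarith
    field_simp
    linear_combination k2'
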